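/- With the same setting, if x₁ = Hx₁' and x₂ = Hx₂' are distinct nonzero orbits in R/H whose images under ρ : R/H → S/H are distinct (where S = ℤ/p^{r-1}ℤ), then Tr_{K/ℚ}(f_{x₁} · conj(f_{x₂})) = 0. -/

import Mathlib

/-- The Gaussian period `f_{Hx} = Σ_{h ∈ H} ζ^(h·x)` attached to the orbit of `x`
under a subgroup `H` of `(ℤ/mℤ)ˣ`. -/
noncomputable def gaussPeriod {m : ℕ} (ζ : ℂ) (H : Subgroup (ZMod m)ˣ) (x : ZMod m) : ℂ :=
  ∑ᶠ h : H, ζ ^ (((h : (ZMod m)ˣ) : ZMod m) * x).val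

/-- `K` is the fixed field of `H` acting on `ℚ(ζ)` by `σ_h(ζ) = ζ^h`: an element
`z ∈ ℂ` lies in `K` iff `z ∈ ℚ(ζ)` and `z` is fixed by every `ℚ`-automorphism `σ`
of `ℚ(ζ)` sending `ζ` to `ζ^h` for some `h ∈ H`. -/
def IsHFixedField {m : ℕ} (ζ : ℂ) (H : Subgroup (ZMod m)ˣ)
    (K : IntermediateField ℚ ℂ) : Prop :=
  ∀ z : ℂ, z ∈ K ↔ ∃ hz : z ∈ IntermediateField.adjoin ℚ ({ζ} : Set ℂ),
    ∀ σ : (IntermediateField.adjoin ℚ ({ζ} : Set ℂ)) ≃ₐ[ℚ]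
        (IntermediateField.adjoin ℚ ({ζ} : Set ℂ)),
      (∃ h : H, (σ ⟨ζ, IntermediateField.subset_adjoin ℚ {ζ} rfl⟩ : ℂ) =
          ζ ^ (((h : (ZMod m)ˣ) : ZMod m)).val) →
      (σ ⟨z, hz⟩ : ℂ) = z

/-! Expanding the product gives `f_{x₁} · conj(f_{x₂}) = ∑_{h, h' ∈ H} ζ^(h x₁ - h' x₂)`, and the
hypothesis on `ρ` says exactly that no exponent `h x₁ - h' x₂` is divisible by `p^(r-1)`. The
trace from `ℚ(ζ)` to `ℚ` of `ζ^c` is the Ramanujan sum `∑ ξ^c` over the primitive `p^r`-th roots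
of unity `ξ`; multiplication by `ζ^p` permutes these roots and scales the sum by `ζ^(pc) ≠ 1`, so
it vanishes. Since `K ⊆ ℚ(ζ)`, `Tr_{ℚ(ζ)/ℚ} = [ℚ(ζ) : K] · Tr_{K/ℚ}` on `K`. -/

open Finset IntermediateField Polynomial

theorem IsPrimitiveRoot.sum_primitiveRoots_prime_pow_pow_eq_zero {R : Type*} [CommRing R]
    [IsDomain R] {p r : ℕ} (hp : p.Prime) {ζ : R} (hζ : IsPrimitiveRoot ζ (p ^ r)) {c : ℕ}
    (hc : ¬ p ^ (r - 1) ∣ c) :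
    ∑ ξ ∈ primitiveRoots (p ^ r) R, ξ ^ c = 0 := by
  have : Fact p.Prime := ⟨hp⟩
  obtain ⟨k, rfl⟩ : ∃ k, r = k + 1 :=
    Nat.exists_eq_succ_of_ne_zero (by rintro rfl; exact hc (by simp))
  rw [Nat.add_sub_cancel] at hc
  have hpos : 0 < p ^ k := pow_pos hp.pos k
  have hη : IsPrimitiveRoot (ζ ^ p) (p ^ k) := hζ.pow (pow_pos hp.pos _) (pow_succ' p k)
  set η := ζ ^ p
  have hmul_mem : ∀ θ : R, θ ^ p ^ k = 1 → ∀ ξ ∈ primitiveRoots (p ^ (k + 1)) R,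
      θ * ξ ∈ primitiveRoots (p ^ (k + 1)) R := by
    intro θ hθ ξ hξ
    rw [mem_primitiveRoots (pow_pos hp.pos _)] at hξ ⊢
    rw [IsPrimitiveRoot.iff_orderOf]
    refine orderOf_eq_prime_pow ?_ ?_
    · rw [mul_pow, hθ, one_mul]
      exact hξ.pow_ne_one_of_pos_of_lt hpos.ne' (Nat.pow_lt_pow_right hp.one_lt k.lt_succ_self)
    · rw [mul_pow, pow_succ, pow_mul, hθ, one_pow, one_mul, ← pow_succ, hξ.pow_eq_one]
  have hinv : η ^ (p ^ k - 1) * η = 1 := by rw [pow_sub_one_mul hpos.ne', hη.pow_eq_one]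
  have hshift : ∑ ξ ∈ primitiveRoots (p ^ (k + 1)) R, ξ ^ c =
      η ^ c * ∑ ξ ∈ primitiveRoots (p ^ (k + 1)) R, ξ ^ c := by
    rw [mul_sum]
    refine sum_nbij' (η ^ (p ^ k - 1) * ·) (η * ·) ?_ ?_ ?_ ?_ ?_
    · exact hmul_mem _ (by rw [← pow_mul, mul_comm, pow_mul, hη.pow_eq_one, one_pow])
    · exact hmul_mem _ hη.pow_eq_one
    · intro ξ _; rw [← mul_assoc, mul_comm η, hinv, one_mul]
    · intro ξ _; rw [← mul_assoc, hinv, one_mul]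
    · intro ξ _; rw [← mul_pow, ← mul_assoc, mul_comm η, hinv, one_mul]
  have hηc : η ^ c ≠ 1 := fun h => hc ((hη.pow_eq_one_iff_dvd c).1 h)
  by_contra hS
  exact hηc ((mul_eq_right₀ hS).1 hshift.symm)

theorem IsPrimitiveRoot.algebraMap_trace_pow {n : ℕ} [NeZero n] {L E : Type*} [Field L]
    [Algebra ℚ L] [IsCyclotomicExtension {n} ℚ L] [Field E] [Algebra ℚ E] [IsAlgClosed E]
    {ζ : L} (hζ : IsPrimitiveRoot ζ n) (c : ℕ) :
    algebraMap ℚ E (Algebra.trace ℚ L (ζ ^ c)) = ∑ ξ ∈ primitiveRoots n E, ξ ^ c := by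
  have := IsCyclotomicExtension.finiteDimensional {n} ℚ L
  rw [trace_eq_sum_embeddings E, ← sum_coe_sort (primitiveRoots n E)]
  exact Fintype.sum_equiv (hζ.embeddingsEquivPrimitiveRoots E
    (cyclotomic.irreducible_rat (NeZero.pos n))) _ _ fun σ => map_pow σ ζ c

theorem IntermediateField.trace_eq_zero_of_le {F E : Type*} [Field F] [CharZero F] [Field E]
    [Algebra F E] {K L : IntermediateField F E} (h : K ≤ L) [FiniteDimensional F L] {x : K}
    (hx : Algebra.trace F L (inclusion h x) = 0) : Algebra.trace F K x = 0 := by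
  let := (inclusion h).toAlgebra
  have : IsScalarTower F K L := .of_algebraMap_eq fun _ => rfl
  have := FiniteDimensional.left F K L
  have := FiniteDimensional.right F K L
  have := Module.Free.of_divisionRing K L
  rw [show inclusion h x = algebraMap K L x from rfl, ← Algebra.trace_trace (S := K),
    Algebra.trace_algebraMap, map_nsmul, nsmul_eq_zero_iff] at hx
  exact hx.resolve_right Module.finrank_pos.ne'

theorem gaussPeriod_mul_conj {m : ℕ} [NeZero m] {ζ : ℂ} (hζ : ζ ^ m = 1)
    (H : Subgroup (ZMod m)ˣ) [Fintype H] (x y : ZMod m) :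
    gaussPeriod ζ H x * starRingEnd ℂ (gaussPeriod ζ H y) =
      ∑ h : H × H,
        ζ ^ (((h.1 : (ZMod m)ˣ) : ZMod m) * x - ((h.2 : (ZMod m)ˣ) : ZMod m) * y).val := by
  let ψ := AddChar.zmodChar m hζ
  have hψ (a : ZMod m) : ζ ^ a.val = ψ a := (AddChar.zmodChar_apply hζ a).symm
  simp only [gaussPeriod, finsum_eq_sum_of_fintype, hψ, sub_eq_add_neg, AddChar.map_add_eq_mul,
    AddChar.map_neg_eq_conj, map_sum, sum_mul_sum, Fintype.sum_prod_type]

theorem ZMod.not_dvd_val_sub_of_castHom_ne {m d : ℕ} [NeZero m] (hd : d ∣ m)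
    (H : Subgroup (ZMod m)ˣ) {x y : ZMod m}
    (hxy : ∀ h : H, ZMod.castHom hd (ZMod d) y ≠
      ZMod.castHom hd (ZMod d) (((h : (ZMod m)ˣ) : ZMod m) * x))
    (h h' : H) :
    ¬ d ∣ (((h : (ZMod m)ˣ) : ZMod m) * x - ((h' : (ZMod m)ˣ) : ZMod m) * y).val := by
  set φ := ZMod.castHom hd (ZMod d)
  intro hdvd
  have hφ : φ (((h : (ZMod m)ˣ) : ZMod m) * x) = φ (((h' : (ZMod m)ˣ) : ZMod m) * y) := by
    rw [← sub_eq_zero, ← map_sub, ZMod.castHom_apply, ZMod.cast_eq_val,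
      ZMod.natCast_eq_zero_iff]
    exact hdvd
  apply hxy (h'⁻¹ * h)
  rw [Subgroup.coe_mul, Subgroup.coe_inv, Units.val_mul, mul_assoc, map_mul, hφ, ← map_mul,
    Units.inv_mul_cancel_left]

theorem stmt5_general (p r : ℕ) (hp : p.Prime)
    (ζ : ℂ) (hζ : IsPrimitiveRoot ζ (p ^ r))
    (H : Subgroup (ZMod (p ^ r))ˣ)
    (K : IntermediateField ℚ ℂ) (hK : IsHFixedField ζ H K)
    (x₁ x₂ : ZMod (p ^ r))
    (hrho : ∀ h : H,
      ZMod.castHom (pow_dvd_pow p (Nat.sub_le r 1)) (ZMod (p ^ (r - 1))) x₂ ≠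
        ZMod.castHom (pow_dvd_pow p (Nat.sub_le r 1)) (ZMod (p ^ (r - 1)))
          (((h : (ZMod (p ^ r))ˣ) : ZMod (p ^ r)) * x₁))
    (w : K)
    (hw : (w : ℂ) = gaussPeriod ζ H x₁ * (starRingEnd ℂ) (gaussPeriod ζ H x₂)) :
    Algebra.trace ℚ K w = 0 := by
  have : NeZero (p ^ r) := ⟨pow_ne_zero r hp.ne_zero⟩
  have := Fintype.ofFinite H
  have : IsCyclotomicExtension {p ^ r} ℚ ℚ⟮ζ⟯ :=
    (IntermediateField.isCyclotomicExtension_singleton_iff_eq_adjoin _ _ _ _ hζ).2 rfl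
  have := IsCyclotomicExtension.finiteDimensional {p ^ r} ℚ ℚ⟮ζ⟯
  have hKL : K ≤ ℚ⟮ζ⟯ := fun z hz => ((hK z).1 hz).1
  have hgen : IsPrimitiveRoot (AdjoinSimple.gen ℚ ζ) (p ^ r) :=
    IsPrimitiveRoot.coe_submonoidClass_iff.1 hζ
  have hw' : inclusion hKL w = ∑ h : H × H, AdjoinSimple.gen ℚ ζ ^
      (((h.1 : (ZMod (p ^ r))ˣ) : ZMod (p ^ r)) * x₁ -
        ((h.2 : (ZMod (p ^ r))ˣ) : ZMod (p ^ r)) * x₂).val := by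
    apply Subtype.ext
    simp only [coe_inclusion, hw, gaussPeriod_mul_conj hζ.pow_eq_one,
      AddSubmonoidClass.coe_finsetSum, SubmonoidClass.coe_pow, AdjoinSimple.coe_gen]
  refine trace_eq_zero_of_le hKL ?_
  apply (algebraMap ℚ ℂ).injective
  rw [hw', map_sum, map_sum, map_zero]
  refine sum_eq_zero fun h _ => ?_
  refine (hgen.algebraMap_trace_pow (E := ℂ) _).trans ?_
  exact hζ.sum_primitiveRoots_prime_pow_pow_eq_zero hp
    (ZMod.not_dvd_val_sub_of_castHom_ne _ H hrho h.1 h.2)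

/-- if `x₁ = Hx₁'` and `x₂ = Hx₂'` are distinct nonzero orbits in
`R/H` whose images under `ρ : R/H → S/H` (`S = ℤ/p^(r−1)ℤ`) are distinct, then
`Tr_{K/ℚ}(f_{x₁} · conj(f_{x₂})) = 0`. -/
theorem stmt5 (p r e : ℕ) (hp : p.Prime) (hodd : Odd p) (hr : 2 ≤ r)
    (he : 0 < e) (hdvd : e ∣ p - 1)
    (ζ : ℂ) (hζ : IsPrimitiveRoot ζ (p ^ r))
    (H : Subgroup (ZMod (p ^ r))ˣ) (hH : Nat.card H = e)
    (K : IntermediateField ℚ ℂ) (hK : IsHFixedField ζ H K)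
    (x₁ x₂ : ZMod (p ^ r)) (hx₁ : x₁ ≠ 0) (hx₂ : x₂ ≠ 0)
    (horb : ∀ h : H, x₂ ≠ ((h : (ZMod (p ^ r))ˣ) : ZMod (p ^ r)) * x₁)
    (hrho : ∀ h : H,
      ZMod.castHom (pow_dvd_pow p (Nat.sub_le r 1)) (ZMod (p ^ (r - 1))) x₂ ≠
        ZMod.castHom (pow_dvd_pow p (Nat.sub_le r 1)) (ZMod (p ^ (r - 1)))
          (((h : (ZMod (p ^ r))ˣ) : ZMod (p ^ r)) * x₁))
    (w : K)
    (hw : (w : ℂ) = gaussPeriod ζ H x₁ * (starRingEnd ℂ) (gaussPeriod ζ H x₂)) :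
    Algebra.trace ℚ K w = 0 :=
  stmt5_general p r hp ζ hζ H K hK x₁ x₂ hrho w hw
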